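/- (Constantin–E–Titi commutator identity.) Let ρ be a standard mollifier on ℝ³, ε ∈ (0,1], and let u : ℝ³ → ℝ³ be locally integrable and bounded (e.g. continuous and 2π-periodic). Then for every x ∈ ℝ³, the mollification of the tensor product satisfies (u ⊗ u)_ε(x) = u_ε(x) ⊗ u_ε(x) + r_ε(u,u)(x) − (u(x) − u_ε(x)) ⊗ (u(x) − u_ε(x)), where r_ε(u,u)(x) := ∫_{ℝ³} ρ_ε(y) [u(x−y) − u(x)] ⊗ [u(x−y) − u(x)] dy. -/

import Mathlib

open MeasureTheory Real Filter Topology Set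

noncomputable section

/-- Euclidean space `ℝ³`. -/
abbrev E3 := EuclideanSpace ℝ (Fin 3)

/-- `3 × 3` real matrices. -/
abbrev M3 := Matrix (Fin 3) (Fin 3) ℝ

/-- A standard mollifier on `ℝ³`: smooth, compactly supported in the unit ball,
nonnegative, radial, with total integral one. -/
def IsStdMollifier (ρ : E3 → ℝ) : Prop :=
  ContDiff ℝ (⊤ : ℕ∞) ρ ∧ HasCompactSupport ρ ∧ (∀ x, 0 ≤ ρ x) ∧
    tsupport ρ ⊆ Metric.ball (0 : E3) 1 ∧
    (∀ x y : E3, ‖x‖ = ‖y‖ → ρ x = ρ y) ∧ (∫ x, ρ x) = 1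

/-- The rescaled mollifier kernel `ρ_ε(x) = ε⁻³ ρ(x/ε)`. -/
def mollK (ρ : E3 → ℝ) (ε : ℝ) (x : E3) : ℝ := (ε ^ 3)⁻¹ * ρ (ε⁻¹ • x)

/-- Mollification of a vector field: `u_ε(x) = ∫ ρ_ε(x - y) u(y) dy`. -/
def mollifyV (ρ : E3 → ℝ) (ε : ℝ) (u : E3 → E3) (x : E3) : E3 :=
  ∫ y, mollK ρ ε (x - y) • u y

/-- Mollification of a scalar field: `f_ε(x) = ∫ ρ_ε(x - y) f(y) dy`. -/
def mollifyS (ρ : E3 → ℝ) (ε : ℝ) (f : E3 → ℝ) (x : E3) : ℝ :=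
  ∫ y, mollK ρ ε (x - y) * f y

/-- Entrywise mollification of a matrix-valued field. -/
def mollifyM (ρ : E3 → ℝ) (ε : ℝ) (A : E3 → M3) (x : E3) : M3 :=
  fun i j => ∫ y, mollK ρ ε (x - y) * A y i j

/-- `2π`-periodicity in each coordinate direction. -/
def Periodic3 {α : Type*} (u : E3 → α) : Prop :=
  ∀ (x : E3) (i : Fin 3), u (x + EuclideanSpace.single i (2 * π)) = u x

/-- `K` is an upper bound for the `α`-Hölder seminorm of `u` (in particular `K ≥ 0`,
as is the Hölder seminorm `[u]_α`). -/
def HolderBound (α K : ℝ) (u : E3 → E3) : Prop :=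
  0 ≤ K ∧ ∀ x y : E3, ‖u x - u y‖ ≤ K * ‖x - y‖ ^ α

/-- Tensor product of two vectors: `(a ⊗ b)_{ij} = aᵢ bⱼ`. -/
def tens (a b : E3) : M3 := fun i j => a i * b j

/-- Double contraction of matrices: `A : B = Σᵢⱼ Aᵢⱼ Bᵢⱼ`. -/
def dcon (A B : M3) : ℝ := ∑ i, ∑ j, A i j * B i j

/-- Frobenius norm of a `3 × 3` matrix. -/
def frob (A : M3) : ℝ := Real.sqrt (∑ i, ∑ j, (A i j) ^ 2)

/-- The Jacobian matrix `(∇u)_{ij} = ∂ⱼ uᵢ` of a vector field. -/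
def jac (u : E3 → E3) (x : E3) : M3 :=
  fun i j => fderiv ℝ u x (EuclideanSpace.single j 1) i

/-- Divergence of a vector field. -/
def divg (u : E3 → E3) (x : E3) : ℝ := ∑ i, jac u x i i

/-- The periodicity box `[0, 2π]³`, playing the role of the torus `𝕋³`. -/
def Box : Set E3 := {x | ∀ i, x i ∈ Icc (0 : ℝ) (2 * π)}

/-- The Constantin–E–Titi remainder
`r_ε(u,u)(x) = ∫ ρ_ε(y) [u(x-y) - u(x)] ⊗ [u(x-y) - u(x)] dy`. -/
def cet (ρ : E3 → ℝ) (ε : ℝ) (u : E3 → E3) (x : E3) : M3 :=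
  fun i j => ∫ y, mollK ρ ε y * ((u (x - y) - u x) i * (u (x - y) - u x) j)


lemma coord_le_norm (x : E3) (i : Fin 3) : |x i| ≤ ‖x‖ := by
  rw [EuclideanSpace.norm_eq]
  refine Real.le_sqrt_of_sq_le ?_
  have h : |x i| ^ 2 = ‖x i‖ ^ 2 := by rw [Real.norm_eq_abs]
  rw [h]
  exact Finset.single_le_sum (f := fun j => ‖x j‖ ^ 2) (fun j _ => sq_nonneg _) (Finset.mem_univ i)

/-- The Constantin–E–Titi commutator identity:
`(u ⊗ u)_ε = u_ε ⊗ u_ε + r_ε(u,u) - (u - u_ε) ⊗ (u - u_ε)`. -/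
theorem stmt2 (ρ : E3 → ℝ) (hρ : IsStdMollifier ρ) (ε : ℝ) (hε : ε ∈ Ioc (0 : ℝ) 1)
    (u : E3 → E3) (hloc : LocallyIntegrable u) (hbdd : ∃ M : ℝ, ∀ x, ‖u x‖ ≤ M) :
    ∀ x : E3,
      mollifyM ρ ε (fun y => tens (u y) (u y)) x =
        tens (mollifyV ρ ε u x) (mollifyV ρ ε u x) + cet ρ ε u x
          - tens (u x - mollifyV ρ ε u x) (u x - mollifyV ρ ε u x) := by
  obtain ⟨hsm, hcs, hnn, hsupp, hrad, hint⟩ := hρ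
  obtain ⟨hε0, hε1⟩ := hε
  obtain ⟨M, hM⟩ := hbdd
  have hM0 : 0 ≤ M := le_trans (norm_nonneg _) (hM 0)
  intro x
  -- basic facts about the rescaled kernel
  have hKcont : Continuous (mollK ρ ε) :=
    continuous_const.mul (hsm.continuous.comp (continuous_const_smul _))
  have hKcs : HasCompactSupport (mollK ρ ε) := by
    apply HasCompactSupport.intro (isCompact_closedBall (0 : E3) 1)
    intro z hz
    have h1 : (1 : ℝ) < ‖z‖ := by simpa [Metric.mem_closedBall, dist_zero_right] using hz
    have hns : ε⁻¹ • z ∉ tsupport ρ := by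
      intro h
      have hb := hsupp h
      rw [Metric.mem_ball, dist_zero_right, norm_smul] at hb
      have h2 : (1 : ℝ) ≤ ‖ε⁻¹‖ * ‖z‖ := by
        rw [Real.norm_eq_abs, abs_of_pos (inv_pos.2 hε0)]
        calc (1 : ℝ) = ε⁻¹ * ε := by field_simp
        _ ≤ ε⁻¹ * ‖z‖ := by
            exact mul_le_mul_of_nonneg_left (hε1.trans h1.le) (inv_pos.2 hε0).le
      linarith
    simp [mollK, image_eq_zero_of_notMem_tsupport hns]
  have hKtot : (∫ y, mollK ρ ε y) = 1 := by
    unfold mollK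
    rw [integral_const_mul, MeasureTheory.Measure.integral_comp_inv_smul_of_nonneg volume ρ hε0.le]
    simp only [hint, smul_eq_mul, mul_one]
    have h3 : Module.finrank ℝ E3 = 3 := by simp
    rw [h3]
    field_simp
  set g : E3 → ℝ := fun y => mollK ρ ε (x - y) with hgdef
  have hgcont : Continuous g := hKcont.comp (continuous_const.sub continuous_id)
  have hgcs : HasCompactSupport g := hKcs.comp_homeomorph (Homeomorph.subLeft x)
  have hgint : Integrable g := hgcont.integrable_of_hasCompactSupport hgcs
  have hgtot : (∫ y, g y) = 1 := by
    rw [hgdef]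
    rw [integral_sub_left_eq_self (mollK ρ ε) volume x]
    exact hKtot
  have hum : AEStronglyMeasurable u volume := hloc.aestronglyMeasurable
  have humi : ∀ i : Fin 3, AEStronglyMeasurable (fun y => u y i) volume := fun i =>
    (EuclideanSpace.proj (𝕜 := ℝ) i).continuous.comp_aestronglyMeasurable hum
  -- integrability of the various products
  have hI1 : ∀ i : Fin 3, Integrable (fun y => g y * u y i) := by
    intro i
    have h := Integrable.bdd_mul hgint (humi i)
      (Filter.Eventually.of_forall fun y => by simpa [Real.norm_eq_abs] using (coord_le_norm (u y) i).trans (hM y))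
    simpa [mul_comm] using h
  have hI2 : ∀ i j : Fin 3, Integrable (fun y => g y * (u y i * u y j)) := by
    intro i j
    have hmeas : AEStronglyMeasurable (fun y => u y i * u y j) volume := (humi i).mul (humi j)
    have hb : ∀ y, ‖u y i * u y j‖ ≤ M * M := by
      intro y
      rw [Real.norm_eq_abs, abs_mul]
      exact mul_le_mul ((coord_le_norm (u y) i).trans (hM y))
        ((coord_le_norm (u y) j).trans (hM y)) (abs_nonneg _) hM0
    have h := Integrable.bdd_mul hgint hmeas (Filter.Eventually.of_forall hb)
    simpa [mul_comm] using h
  have hs : Integrable (fun y => g y • u y) := by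
    refine Integrable.mono' ((hgint.norm).const_mul M)
      ((hgcont.aestronglyMeasurable).smul hum) ?_
    filter_upwards with y
    rw [norm_smul]
    calc ‖g y‖ * ‖u y‖ ≤ ‖g y‖ * M := by
          exact mul_le_mul_of_nonneg_left (hM y) (norm_nonneg _)
    _ = M * ‖g y‖ := by ring
  have huε : ∀ i : Fin 3, mollifyV ρ ε u x i = ∫ y, g y * u y i := by
    intro i
    have h := ((EuclideanSpace.proj (𝕜 := ℝ) i).integral_comp_comm hs).symm
    simpa [mollifyV] using h
  -- rewriting the remainder
  have hcet : ∀ i j : Fin 3,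
      cet ρ ε u x i j = ∫ y, g y * ((u y - u x) i * (u y - u x) j) := by
    intro i j
    have h := integral_sub_left_eq_self
      (fun z => g z * ((u z - u x) i * (u z - u x) j)) volume x
    have heq : (fun y => g (x - y) * ((u (x - y) - u x) i * (u (x - y) - u x) j)) =
        fun y => mollK ρ ε y * ((u (x - y) - u x) i * (u (x - y) - u x) j) := by
      funext y
      simp [hgdef, sub_sub_cancel]
    rw [heq] at h
    exact h
  have hexpand : ∀ i j : Fin 3,
      (∫ y, g y * ((u y - u x) i * (u y - u x) j)) =
        (∫ y, g y * (u y i * u y j)) - u x j * (∫ y, g y * u y i)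
          - u x i * (∫ y, g y * u y j) + (u x i * u x j) * (∫ y, g y) := by
    intro i j
    have heq : (fun y => g y * ((u y - u x) i * (u y - u x) j)) =
        fun y => (g y * (u y i * u y j) - u x j * (g y * u y i)
          - u x i * (g y * u y j)) + (u x i * u x j) * g y := by
      funext y
      have h1 : (u y - u x) i = u y i - u x i := rfl
      have h2 : (u y - u x) j = u y j - u x j := rfl
      rw [h1, h2]
      ring
    have hA : Integrable (fun y => g y * (u y i * u y j) - u x j * (g y * u y i)) volume :=
      (hI2 i j).sub ((hI1 i).const_mul (u x j))
    have hB : Integrable (fun y => (g y * (u y i * u y j) - u x j * (g y * u y i))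
        - u x i * (g y * u y j)) volume := hA.sub ((hI1 j).const_mul (u x i))
    have hC : Integrable (fun y => (u x i * u x j) * g y) volume :=
      hgint.const_mul (u x i * u x j)
    have hD : Integrable (fun y => u x j * (g y * u y i)) volume :=
      (hI1 i).const_mul (u x j)
    have hE : Integrable (fun y => u x i * (g y * u y j)) volume :=
      (hI1 j).const_mul (u x i)
    rw [heq, integral_add hB hC, integral_sub hA hE, integral_sub (hI2 i j) hD,
      integral_const_mul (u x j), integral_const_mul (u x i), integral_const_mul (u x i * u x j)]
  ext i j
  have hLHS : mollifyM ρ ε (fun y => tens (u y) (u y)) x i j =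
      ∫ y, g y * (u y i * u y j) := rfl
  have hsub1 : (u x - mollifyV ρ ε u x) i = u x i - mollifyV ρ ε u x i := rfl
  have hsub2 : (u x - mollifyV ρ ε u x) j = u x j - mollifyV ρ ε u x j := rfl
  simp only [Matrix.add_apply, Matrix.sub_apply, tens, hLHS, hcet i j, hexpand i j,
    hgtot, hsub1, hsub2, huε i, huε j]
  ring


end
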